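/- arXiv:2602.12830 — 4 statements merged into one kernel-verified Lean document; each statement's English description precedes it below -/
import Mathlib

section
/- Let n be a positive integer and c ≥ n a real number. For each positive integer l define ρ̄_l := 1 - (1 - min{1, c/(n·l)})^n. Then ∑_{l=1}^{k} ρ̄_l = k for every positive integer k ≤ c/n, and for every integer k > c/n one has c̄ + c·log k ≥ ∑_{l=1}^{k} ρ̄_l ≥ c_ + (c/n)·log k, where c̄ := ⌊c/n⌋ - c·log⌊c/n⌋ and c_ := ⌊c/n⌋ - (c/n)/⌊c/n⌋ - (c/n)·log⌊c/n⌋. -/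
/-!
The terms with `l ≤ c/n` are exactly `1`. For the others, `x = c/(n l) ≤ 1` and
`x ≤ 1 - (1 - x)^n ≤ n x` (the lower bound since `(1 - x)^n ≤ 1 - x`, the upper one by Bernoulli),
so the tail `∑_{⌊c/n⌋ < l ≤ k} ρ̄_l` lies between `c/n` and `c` times a harmonic sum, which is
compared with `log k - log ⌊c/n⌋` through `1/(x+1) ≤ log (x+1) - log x ≤ 1/x`.
-/

open Finset Real

/-- The paper's `ρ̄_l`, written with `a = c / n`. -/
noncomputable def rhoBar (n : ℕ) (a : ℝ) (l : ℕ) : ℝ := 1 - (1 - min 1 (a / l)) ^ n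

theorem le_one_sub_one_sub_pow {x : ℝ} {n : ℕ} (hn : n ≠ 0) (h0 : 0 ≤ x) (h1 : x ≤ 1) :
    x ≤ 1 - (1 - x) ^ n := by
  have := pow_le_of_le_one (sub_nonneg.2 h1) (by linarith) hn
  linarith

theorem one_sub_one_sub_pow_le {x : ℝ} (hx : x ≤ 2) (n : ℕ) : 1 - (1 - x) ^ n ≤ n * x := by
  have := one_add_mul_le_pow (a := -x) (by linarith) n
  rw [← sub_eq_add_neg] at this
  linarith

theorem log_add_one_sub_log_le_inv {x : ℝ} (hx : 0 < x) : log (x + 1) - log x ≤ x⁻¹ := by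
  have := log_le_sub_one_of_pos (show 0 < (x + 1) / x by positivity)
  rw [log_div (by positivity) hx.ne'] at this
  field_simp at this ⊢
  linarith

theorem inv_add_one_le_log_add_one_sub_log {x : ℝ} (hx : 0 < x) :
    (x + 1)⁻¹ ≤ log (x + 1) - log x := by
  have := one_sub_inv_le_log_of_pos (show 0 < (x + 1) / x by positivity)
  rw [log_div (by positivity) hx.ne'] at this
  field_simp at this ⊢
  linarith

theorem sum_Ioc_inv_le_log_sub_log {m k : ℕ} (hm : 0 < m) (hmk : m ≤ k) :
    ∑ l ∈ Ioc m k, (l : ℝ)⁻¹ ≤ log k - log m := by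
  induction k, hmk using Nat.le_induction with
  | base => simp
  | succ k hmk ih =>
    rw [sum_Ioc_succ_top hmk]
    have := inv_add_one_le_log_add_one_sub_log (x := k) (by exact_mod_cast hm.trans_le hmk)
    push_cast
    linarith

theorem log_add_one_sub_log_add_one_le_sum_Ioc_inv {m k : ℕ} (hmk : m ≤ k) :
    log (k + 1) - log (m + 1) ≤ ∑ l ∈ Ioc m k, (l : ℝ)⁻¹ := by
  induction k, hmk using Nat.le_induction with
  | base => simp
  | succ k hmk ih =>
    rw [sum_Ioc_succ_top hmk]
    have := log_add_one_sub_log_le_inv (x := k + 1) (by positivity)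
    push_cast
    linarith

theorem log_sub_log_sub_inv_le_sum_Ioc_inv {m k : ℕ} (hm : 0 < m) (hmk : m ≤ k) :
    log k - log m - (m : ℝ)⁻¹ ≤ ∑ l ∈ Ioc m k, (l : ℝ)⁻¹ := by
  have hk : (0 : ℝ) < k := by exact_mod_cast hm.trans_le hmk
  have := log_le_log hk (by linarith : (k : ℝ) ≤ k + 1)
  have := log_add_one_sub_log_le_inv (x := m) (by positivity)
  have := log_add_one_sub_log_add_one_le_sum_Ioc_inv hmk
  linarith

section rhoBar

variable {n : ℕ} {a : ℝ}

theorem rhoBar_eq_one (hn : n ≠ 0) {l : ℕ} (hl : 0 < l) (hla : (l : ℝ) ≤ a) :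
    rhoBar n a l = 1 := by
  have : 1 ≤ a / l := (one_le_div (by positivity)).2 hla
  simp [rhoBar, min_eq_left this, hn]

theorem rhoBar_of_le {l : ℕ} (hal : a ≤ l) : rhoBar n a l = 1 - (1 - a / l) ^ n := by
  rw [rhoBar, min_eq_right (div_le_one_of_le₀ hal l.cast_nonneg)]

theorem div_le_rhoBar (hn : n ≠ 0) (ha : 0 ≤ a) {l : ℕ} (hal : a ≤ l) : a / l ≤ rhoBar n a l :=
  rhoBar_of_le hal ▸
    le_one_sub_one_sub_pow hn (by positivity) (div_le_one_of_le₀ hal l.cast_nonneg)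

theorem rhoBar_le {l : ℕ} (hal : a ≤ l) : rhoBar n a l ≤ n * (a / l) :=
  rhoBar_of_le hal ▸
    one_sub_one_sub_pow_le (by linarith [div_le_one_of_le₀ hal l.cast_nonneg]) n

theorem sum_Icc_rhoBar_of_le (hn : n ≠ 0) {k : ℕ} (hk : (k : ℝ) ≤ a) :
    ∑ l ∈ Icc 1 k, rhoBar n a l = k := by
  rw [sum_congr rfl fun l hl => rhoBar_eq_one hn (mem_Icc.1 hl).1 <|
    (Nat.cast_le.2 (mem_Icc.1 hl).2).trans hk]
  simp

theorem sum_Icc_rhoBar_eq_floor_add (hn : n ≠ 0) (ha : 0 ≤ a) {k : ℕ} (hk : ⌊a⌋₊ ≤ k) :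
    ∑ l ∈ Icc 1 k, rhoBar n a l = ⌊a⌋₊ + ∑ l ∈ Ioc ⌊a⌋₊ k, rhoBar n a l := by
  have hIcc (j : ℕ) : Icc 1 j = Ioc 0 j := by simpa using Icc_add_one_left_eq_Ioc 0 j
  rw [hIcc, ← sum_Ioc_consecutive _ (Nat.zero_le _) hk, ← hIcc,
    sum_Icc_rhoBar_of_le hn (Nat.floor_le ha)]

theorem sum_Icc_rhoBar_le (hn : n ≠ 0) (ha : 1 ≤ a) {k : ℕ} (hk : ⌊a⌋₊ ≤ k) :
    ∑ l ∈ Icc 1 k, rhoBar n a l ≤ ⌊a⌋₊ + n * a * (log k - log ⌊a⌋₊) := by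
  rw [sum_Icc_rhoBar_eq_floor_add hn (by linarith) hk]
  gcongr
  calc ∑ l ∈ Ioc ⌊a⌋₊ k, rhoBar n a l
      ≤ ∑ l ∈ Ioc ⌊a⌋₊ k, n * a * (l : ℝ)⁻¹ := sum_le_sum fun l hl => by
        rw [mul_assoc, ← div_eq_mul_inv]
        exact rhoBar_le ((Nat.floor_lt (by linarith)).1 (mem_Ioc.1 hl).1).le
    _ = n * a * ∑ l ∈ Ioc ⌊a⌋₊ k, (l : ℝ)⁻¹ := (mul_sum _ _ _).symm
    _ ≤ n * a * (log k - log ⌊a⌋₊) := by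
      gcongr
      exact sum_Ioc_inv_le_log_sub_log (Nat.floor_pos.2 ha) hk

theorem floor_add_le_sum_Icc_rhoBar (hn : n ≠ 0) (ha : 1 ≤ a) {k : ℕ} (hk : ⌊a⌋₊ ≤ k) :
    ⌊a⌋₊ + a * (log k - log ⌊a⌋₊ - (⌊a⌋₊ : ℝ)⁻¹) ≤ ∑ l ∈ Icc 1 k, rhoBar n a l := by
  rw [sum_Icc_rhoBar_eq_floor_add hn (by linarith) hk]
  gcongr
  calc a * (log k - log ⌊a⌋₊ - (⌊a⌋₊ : ℝ)⁻¹)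
      ≤ a * ∑ l ∈ Ioc ⌊a⌋₊ k, (l : ℝ)⁻¹ := by
        gcongr
        exact log_sub_log_sub_inv_le_sum_Ioc_inv (Nat.floor_pos.2 ha) hk
    _ = ∑ l ∈ Ioc ⌊a⌋₊ k, a / l := by rw [mul_sum]; rfl
    _ ≤ ∑ l ∈ Ioc ⌊a⌋₊ k, rhoBar n a l := sum_le_sum fun l hl =>
        div_le_rhoBar hn (by linarith) ((Nat.floor_lt (by linarith)).1 (mem_Ioc.1 hl).1).le

end rhoBar

theorem stmt_0 (n : ℕ) (hn : 0 < n) (c : ℝ) (hc : (n : ℝ) ≤ c)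
    (ρbar : ℕ → ℝ)
    (hρbar : ∀ l : ℕ, ρbar l = 1 - (1 - min 1 (c / (n * l))) ^ n) :
    (∀ k : ℕ, 0 < k → (k : ℝ) ≤ c / n →
      ∑ l ∈ Finset.Icc 1 k, ρbar l = k) ∧
    (∀ k : ℕ, c / n < (k : ℝ) →
      ((⌊c / n⌋₊ : ℝ) - c * Real.log (⌊c / n⌋₊ : ℝ)) + c * Real.log k ≥
        ∑ l ∈ Finset.Icc 1 k, ρbar l ∧
      ∑ l ∈ Finset.Icc 1 k, ρbar l ≥
        ((⌊c / n⌋₊ : ℝ) - (c / n) / (⌊c / n⌋₊ : ℝ)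
          - (c / n) * Real.log (⌊c / n⌋₊ : ℝ)) + (c / n) * Real.log k) := by
  obtain rfl : ρbar = rhoBar n (c / n) := funext fun l => by rw [hρbar, rhoBar, div_div]
  have hn0 : n ≠ 0 := hn.ne'
  have ha : 1 ≤ c / n := (one_le_div (by positivity)).2 hc
  have hna : n * (c / n) = c := mul_div_cancel₀ c (by positivity)
  refine ⟨fun k _ hk => sum_Icc_rhoBar_of_le hn0 hk, fun k hk => ?_⟩
  have hfloor : ⌊c / n⌋₊ ≤ k := Nat.floor_le_of_le hk.le
  constructor
  · have := sum_Icc_rhoBar_le hn0 ha hfloor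
    rw [hna] at this
    linarith
  · have := floor_add_le_sum_Icc_rhoBar hn0 ha hfloor
    rw [div_eq_mul_inv (c / n)]
    linarith
end

section
/- Let Π be a nonempty finite set, ξ ∈ (0,1), C ∈ ℝ, and let SW, SW' : Π → ℝ satisfy SW(π) ≤ C and SW'(π) ≤ C for all π. Let E, E' ⊆ Π. Define P on Π × {0,1} by P(π,1) := (1/|Π|)·ξ^{C-SW(π)} if π ∈ E and 0 otherwise, and P(π,0) := (1/|Π|)·(1 - ξ^{C-SW(π)}) if π ∈ E and 1/|Π| otherwise; define P' analogously from SW' and E'. Then (1/2)·∑_{π∈Π} ∑_{m∈{0,1}} |P(π,m) - P'(π,m)| ≤ |log ξ|·max_{π∈Π} |SW'(π) - SW(π)| + |E Δ E'| / |Π|, where E Δ E' := (E \ E') ∪ (E' \ E) is the symmetric difference. -/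
/-!
Both joint laws mix, over the uniform prior on `Γ`, a two-point law of `m` with success
probability `a π = 𝟙[π ∈ E] ξ ^ (C - SW π)`, so the total variation distance is the average
of `|a π - a' π|`. Off `E ∆ E'` this is a difference of two values of `t ↦ ξ ^ t` on `[0, ∞)`,
where that map is `|log ξ|`-Lipschitz; on `E ∆ E'` it is at most `1`.
-/

open Finset

section

open Real

lemma abs_exp_sub_exp_le_of_nonpos {x y : ℝ} (hx : x ≤ 0) (hy : y ≤ 0) :
    |exp x - exp y| ≤ |x - y| := by
  wlog hxy : x ≤ y generalizing x y
  · rw [abs_sub_comm, abs_sub_comm x]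
    exact this hy hx (le_of_not_ge hxy)
  have hexp_le : exp x ≤ exp y := exp_le_exp.2 hxy
  have hsplit : exp x = exp y * exp (x - y) := by rw [← exp_add, add_sub_cancel]
  have htangent : 1 + (x - y) ≤ exp (x - y) := by linarith [add_one_le_exp (x - y)]
  have hy_le_one : exp y ≤ 1 := exp_le_one_iff.2 hy
  have hxy_le_one : exp (x - y) ≤ 1 := exp_le_one_iff.2 (by linarith)
  rw [abs_of_nonpos (sub_nonpos.2 hexp_le), abs_of_nonpos (sub_nonpos.2 hxy), hsplit]
  nlinarith [exp_pos y]

lemma abs_rpow_sub_rpow_le {ξ a b : ℝ} (h0 : 0 < ξ) (h1 : ξ ≤ 1) (ha : 0 ≤ a) (hb : 0 ≤ b) :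
    |ξ ^ a - ξ ^ b| ≤ |log ξ| * |a - b| := by
  have hlog : log ξ ≤ 0 := log_nonpos h0.le h1
  rw [rpow_def_of_pos h0, rpow_def_of_pos h0, ← abs_mul, mul_sub]
  exact abs_exp_sub_exp_le_of_nonpos (mul_nonpos_of_nonpos_of_nonneg hlog ha)
    (mul_nonpos_of_nonpos_of_nonneg hlog hb)

end

lemma abs_ite_mem_sub_ite_mem_le {α : Type*} [DecidableEq α] (s t : Finset α) {x : α}
    {u v : ℝ} (hu : u ∈ Set.Icc (0 : ℝ) 1) (hv : v ∈ Set.Icc (0 : ℝ) 1) :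
    |(if x ∈ s then u else 0) - (if x ∈ t then v else 0)| ≤
      |u - v| + if x ∈ symmDiff s t then 1 else 0 := by
  obtain ⟨hu0, hu1⟩ := hu
  obtain ⟨hv0, hv1⟩ := hv
  by_cases hs : x ∈ s <;> by_cases ht : x ∈ t <;>
    simp [hs, ht, Finset.mem_symmDiff, abs_of_nonneg hu0, abs_of_nonneg hv0] <;>
    linarith [abs_nonneg (u - v)]

lemma half_sum_abs_sub_eq_of_bernoulli {ι : Type*} [Fintype ι] {c : ℝ} (hc : 0 ≤ c)
    (a b : ι → ℝ) (P P' : ι → Bool → ℝ)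
    (hP1 : ∀ i, P i true = c * a i) (hP0 : ∀ i, P i false = c * (1 - a i))
    (hP1' : ∀ i, P' i true = c * b i) (hP0' : ∀ i, P' i false = c * (1 - b i)) :
    (1 / 2) * ∑ i, ∑ m, |P i m - P' i m| = c * ∑ i, |a i - b i| := by
  have hpoint : ∀ i, ∑ m, |P i m - P' i m| = 2 * (c * |a i - b i|) := by
    intro i
    rw [Fintype.sum_bool, hP1, hP0, hP1', hP0', ← mul_sub, ← mul_sub,
      show 1 - a i - (1 - b i) = -(a i - b i) by ring, abs_mul, abs_mul, abs_neg,
      abs_of_nonneg hc]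
    ring
  simp only [hpoint, ← mul_sum]
  ring

theorem stmt_9 {Γ : Type*} [Fintype Γ] [Nonempty Γ] [DecidableEq Γ]
    (ξ : ℝ) (hξ : ξ ∈ Set.Ioo (0 : ℝ) 1) (C : ℝ)
    (SW SW' : Γ → ℝ) (hSW : ∀ π, SW π ≤ C) (hSW' : ∀ π, SW' π ≤ C)
    (E E' : Finset Γ) (P P' : Γ → Bool → ℝ)
    (hP1 : ∀ π, P π true =
      if π ∈ E then (1 / (Fintype.card Γ : ℝ)) * ξ ^ (C - SW π) else 0)
    (hP0 : ∀ π, P π false =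
      if π ∈ E then (1 / (Fintype.card Γ : ℝ)) * (1 - ξ ^ (C - SW π))
      else 1 / (Fintype.card Γ : ℝ))
    (hP1' : ∀ π, P' π true =
      if π ∈ E' then (1 / (Fintype.card Γ : ℝ)) * ξ ^ (C - SW' π) else 0)
    (hP0' : ∀ π, P' π false =
      if π ∈ E' then (1 / (Fintype.card Γ : ℝ)) * (1 - ξ ^ (C - SW' π))
      else 1 / (Fintype.card Γ : ℝ)) :
    (1 / 2) * ∑ π, ∑ m, |P π m - P' π m| ≤
      |Real.log ξ| * Finset.univ.sup' Finset.univ_nonempty (fun π => |SW' π - SW π|) +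
      (((E \ E') ∪ (E' \ E)).card : ℝ) / (Fintype.card Γ : ℝ) := by
  obtain ⟨h0, h1⟩ := hξ
  set N : ℝ := (Fintype.card Γ : ℝ)
  set M := univ.sup' univ_nonempty (fun π => |SW' π - SW π|)
  have hN : 0 < N := Nat.cast_pos.2 Fintype.card_pos
  have hpow : ∀ {s}, s ≤ C → ξ ^ (C - s) ∈ Set.Icc (0 : ℝ) 1 := fun hs =>
    ⟨(Real.rpow_pos_of_pos h0 _).le, Real.rpow_le_one h0.le h1.le (sub_nonneg.2 hs)⟩
  set a : Γ → ℝ := fun π => if π ∈ E then ξ ^ (C - SW π) else 0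
  set b : Γ → ℝ := fun π => if π ∈ E' then ξ ^ (C - SW' π) else 0
  have hpoint : ∀ π, |a π - b π| ≤ |Real.log ξ| * M + if π ∈ symmDiff E E' then 1 else 0 := by
    intro π
    refine (abs_ite_mem_sub_ite_mem_le E E' (hpow (hSW π)) (hpow (hSW' π))).trans
      (add_le_add_left ?_ _)
    calc |ξ ^ (C - SW π) - ξ ^ (C - SW' π)|
        ≤ |Real.log ξ| * |(C - SW π) - (C - SW' π)| :=
          abs_rpow_sub_rpow_le h0 h1.le (sub_nonneg.2 (hSW π)) (sub_nonneg.2 (hSW' π))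
      _ = |Real.log ξ| * |SW' π - SW π| := by ring_nf
      _ ≤ |Real.log ξ| * M := by gcongr; exact le_sup' (fun π => |SW' π - SW π|) (mem_univ π)
  rw [half_sum_abs_sub_eq_of_bernoulli (c := 1 / N) (by positivity) a b P P'
    (fun π => by rw [hP1 π]; simp only [a]; split_ifs <;> ring)
    (fun π => by rw [hP0 π]; simp only [a]; split_ifs <;> ring)
    (fun π => by rw [hP1' π]; simp only [b]; split_ifs <;> ring)
    (fun π => by rw [hP0' π]; simp only [b]; split_ifs <;> ring)]
  calc 1 / N * ∑ π, |a π - b π|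
      ≤ 1 / N * ∑ π, (|Real.log ξ| * M + if π ∈ symmDiff E E' then 1 else 0) := by
        gcongr with π; exact hpoint π
    _ = |Real.log ξ| * M + ((E \ E') ∪ (E' \ E)).card / N := by
        rw [sum_add_distrib, sum_const, card_univ, sum_boole, filter_univ_mem, symmDiff_def,
          sup_eq_union, nsmul_eq_mul]
        field_simp
        rfl
end

section
/- Let Π be a nonempty finite set, E ⊆ Π with at least two elements, SW : Π → ℝ, and π* ∈ E such that SW(π*) > SW(π) for all π ∈ E with π ≠ π*. Set Ξ_o := SW(π*) - max_{π ∈ E, π ≠ π*} SW(π) > 0. Let δ > 0, let ξ satisfy 0 < ξ < (|E| + δ)^{-1/Ξ_o}, and let C ∈ ℝ with C ≥ SW(π) for all π ∈ Π. Define P(π) := (1/|Π|)·ξ^{C-SW(π)} for π ∈ E and P(π) := 0 otherwise, and ζ := (δ/(|Π|·|E|))·ξ^{C - max_{π∈E, π≠π*} SW(π)}. Then P(π*) - |E|·ζ > ∑_{π ∈ Π, π ≠ π*} P(π). -/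
/-!
Write `M` for the second-best welfare on `E` and `T := ξ ^ (C - M) / |Π|`. Since `ξ < 1`, every
`P π` with `π ≠ π*` is at most `T`, so these `|E| - 1` terms sum to at most `(|E| - 1) T`, while
`P π* = T ξ ^ (-Ξ_o)` and `|E| ζ = δ T`. The bound on `ξ` is exactly `|E| + δ < ξ ^ (-Ξ_o)`, which
gives `P π* - |E| ζ > (|E| - 1) T`.
-/

open Finset

namespace Real

lemma lt_rpow_neg_of_lt_rpow_neg_inv {a ξ Ξ : ℝ} (ha : 0 < a) (hξ : 0 < ξ) (hΞ : 0 < Ξ)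
    (h : ξ < a ^ (-(1 / Ξ))) : a < ξ ^ (-Ξ) := by
  have hpow := rpow_lt_rpow hξ.le h hΞ
  rw [← rpow_mul ha.le, show -(1 / Ξ) * Ξ = -1 by field_simp, rpow_neg_one] at hpow
  rw [rpow_neg hξ.le]
  exact (lt_inv_comm₀ ha (rpow_pos_of_pos hξ Ξ)).2 hpow

end Real

lemma Finset.sum_filter_ne_ite_mem {ι M : Type*} [Fintype ι] [DecidableEq ι] [AddCommMonoid M]
    (s : Finset ι) (a : ι) (f : ι → M) :
    ∑ i ∈ univ.filter (fun i => i ≠ a), (if i ∈ s then f i else 0) = ∑ i ∈ s.erase a, f i := by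
  rw [sum_ite_mem, filter_ne', erase_inter, univ_inter]

lemma Finset.sum_erase_le_card_sub_one_mul {ι : Type*} [DecidableEq ι] {s : Finset ι} {a : ι}
    (ha : a ∈ s) {f : ι → ℝ} {T : ℝ} (hf : ∀ i ∈ s.erase a, f i ≤ T) :
    ∑ i ∈ s.erase a, f i ≤ ((s.card : ℝ) - 1) * T := by
  calc ∑ i ∈ s.erase a, f i ≤ (s.erase a).card • T := sum_le_card_nsmul _ _ _ hf
    _ = ((s.card : ℝ) - 1) * T := by
      rw [nsmul_eq_mul, card_erase_of_mem ha, Nat.cast_pred (card_pos.2 ⟨a, ha⟩)]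

theorem stmt_12_general {Γ : Type*} [Fintype Γ] [DecidableEq Γ]
    (E : Finset Γ) (SW : Γ → ℝ) (πstar : Γ) (hπstar : πstar ∈ E)
    (hne : (E.erase πstar).Nonempty)
    (hopt : ∀ π ∈ E, π ≠ πstar → SW π < SW πstar)
    (Ξo : ℝ) (hΞo : Ξo = SW πstar - (E.erase πstar).sup' hne SW)
    (δ : ℝ) (hδ : 0 < δ)
    (ξ : ℝ) (hξ0 : 0 < ξ)
    (hξ : ξ < ((E.card : ℝ) + δ) ^ (-(1 / Ξo)))
    (C : ℝ)
    (P : Γ → ℝ)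
    (hP : ∀ π, P π =
      if π ∈ E then (1 / (Fintype.card Γ : ℝ)) * ξ ^ (C - SW π) else 0)
    (ζ : ℝ)
    (hζ : ζ = (δ / ((Fintype.card Γ : ℝ) * (E.card : ℝ))) *
      ξ ^ (C - (E.erase πstar).sup' hne SW)) :
    P πstar - (E.card : ℝ) * ζ >
      ∑ π ∈ Finset.univ.filter (fun π => π ≠ πstar), P π := by
  set M := (E.erase πstar).sup' hne SW
  set T := 1 / (Fintype.card Γ : ℝ) * ξ ^ (C - M) with hTdef
  have hN : (0 : ℝ) < Fintype.card Γ := by exact_mod_cast Fintype.card_pos_iff.2 ⟨πstar⟩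
  have hE : (1 : ℝ) ≤ E.card := by exact_mod_cast card_pos.2 ⟨πstar, hπstar⟩
  have hT : 0 < T := by positivity
  have hgap : 0 < Ξo := hΞo ▸ sub_pos.2 <| (sup'_lt_iff hne).2 fun π hπ =>
    hopt π (mem_of_mem_erase hπ) (ne_of_mem_erase hπ)
  have hξ1 : ξ < 1 :=
    hξ.trans <| Real.rpow_lt_one_of_one_lt_of_neg (by linarith) (neg_neg_of_pos (by positivity))
  have hkey : E.card + δ < ξ ^ (-Ξo) :=
    Real.lt_rpow_neg_of_lt_rpow_neg_inv (by positivity) hξ0 hgap hξ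
  have hrest : ∑ π ∈ univ.filter (fun π => π ≠ πstar), P π ≤ (E.card - 1) * T := by
    simp only [hP, sum_filter_ne_ite_mem]
    exact sum_erase_le_card_sub_one_mul hπstar fun π hπ => mul_le_mul_of_nonneg_left
      (Real.rpow_le_rpow_of_exponent_ge hξ0 hξ1.le (by linarith [le_sup' SW hπ])) (by positivity)
  have hbest : P πstar = T * ξ ^ (-Ξo) := by
    rw [hP, if_pos hπstar, mul_assoc, ← Real.rpow_add hξ0, hΞo]
    ring_nf
  have hζT : E.card * ζ = δ * T := by
    rw [hζ, hTdef]
    field_simp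
  rw [hbest, hζT]
  linarith [mul_lt_mul_of_pos_right hkey hT]

theorem stmt_12 {Γ : Type*} [Fintype Γ] [Nonempty Γ] [DecidableEq Γ]
    (E : Finset Γ) (SW : Γ → ℝ) (πstar : Γ) (hπstar : πstar ∈ E)
    (hcard : 2 ≤ E.card)
    (hne : (E.erase πstar).Nonempty)
    (hopt : ∀ π ∈ E, π ≠ πstar → SW π < SW πstar)
    (Ξo : ℝ) (hΞo : Ξo = SW πstar - (E.erase πstar).sup' hne SW)
    (δ : ℝ) (hδ : 0 < δ)
    (ξ : ℝ) (hξ0 : 0 < ξ)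
    (hξ : ξ < ((E.card : ℝ) + δ) ^ (-(1 / Ξo)))
    (C : ℝ) (hC : ∀ π, SW π ≤ C)
    (P : Γ → ℝ)
    (hP : ∀ π, P π =
      if π ∈ E then (1 / (Fintype.card Γ : ℝ)) * ξ ^ (C - SW π) else 0)
    (ζ : ℝ)
    (hζ : ζ = (δ / ((Fintype.card Γ : ℝ) * (E.card : ℝ))) *
      ξ ^ (C - (E.erase πstar).sup' hne SW)) :
    P πstar - (E.card : ℝ) * ζ >
      ∑ π ∈ Finset.univ.filter (fun π => π ≠ πstar), P π :=
  stmt_12_general E SW πstar hπstar hne hopt Ξo hΞo δ hδ ξ hξ0 hξ C P hP ζ hζ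
end

section
/- Let n be a positive integer, q ∈ (0,1), and c > n/(1-q) with c ≥ n; set α := c·(1-q)/n > 1, ω := exp(-(1-q)), c_ := ⌊c/n⌋ - (c/n)/⌊c/n⌋ - (c/n)·log⌊c/n⌋, and β := exp(-c_·(1-q)). Let S : ℕ → ℝ satisfy S_k = k for every positive integer k ≤ c/n and S_k ≥ c_ + (c/n)·log k for every integer k > c/n. Then for every positive integer τ, ∑_{k=1}^{τ} exp(-(1-q)·S_k) ≤ (c/n)·ω + α·β/(α-1). -/
/-!
Up to `m = ⌊c/n⌋` the exploration is linear, so each of the at most `m ≤ c/n` terms is at most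
`ω`. Beyond `m` the logarithmic lower bound on `S` turns the terms into `β k^(-α)`, and since
`α > 1` the convexity of `x ↦ x^(-(α-1))` telescopes this tail to at most `β / (α - 1)`.
-/

open Real Finset

theorem rpow_neg_succ_le_rpow_neg_sub {a x : ℝ} (ha : 0 ≤ a) (hx : 0 < x) :
    a * (x + 1) ^ (-(a + 1)) ≤ x ^ (-a) - (x + 1) ^ (-a) := by
  have hx1 : 0 < x + 1 := by linarith
  have hr : 0 < (x + 1) / x := by positivity
  have hlog : 1 / (x + 1) ≤ log ((x + 1) / x) := by
    have := one_sub_inv_le_log_of_pos hr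
    rwa [inv_div, show 1 - x / (x + 1) = 1 / (x + 1) by field_simp; ring] at this
  have hratio_pow : 1 + a / (x + 1) ≤ ((x + 1) / x) ^ a :=
    calc 1 + a / (x + 1) = 1 + a * (1 / (x + 1)) := by ring
      _ ≤ log ((x + 1) / x) * a + 1 := by nlinarith
      _ ≤ ((x + 1) / x) ^ a := by rw [rpow_def_of_pos hr]; exact add_one_le_exp _
  have hsplit : x ^ (-a) = ((x + 1) / x) ^ a * (x + 1) ^ (-a) := by
    rw [div_rpow hx1.le hx.le, rpow_neg hx1.le, rpow_neg hx.le]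
    field_simp
  have hsucc : (x + 1) ^ (-(a + 1)) = (x + 1) ^ (-a) / (x + 1) := by
    rw [neg_add, rpow_add hx1, rpow_neg_one, div_eq_mul_inv]
  have hp : 0 < (x + 1) ^ (-a) := rpow_pos_of_pos hx1 _
  rw [hsplit, hsucc]
  have := mul_le_mul_of_nonneg_right hratio_pow hp.le
  rw [add_mul, one_mul] at this
  linarith [show a / (x + 1) * (x + 1) ^ (-a) = a * ((x + 1) ^ (-a) / (x + 1)) by ring]

theorem mul_sum_Ioc_rpow_neg_succ_le_sub {a : ℝ} (ha : 0 ≤ a) {m τ : ℕ} (hm : 0 < m)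
    (hmτ : m ≤ τ) :
    a * ∑ k ∈ Ioc m τ, (k : ℝ) ^ (-(a + 1)) ≤ (m : ℝ) ^ (-a) - (τ : ℝ) ^ (-a) := by
  induction τ, hmτ using Nat.le_induction with
  | base => simp
  | succ τ hmτ ih =>
    have hτ : (0 : ℝ) < τ := by exact_mod_cast hm.trans_le hmτ
    rw [sum_Ioc_succ_top hmτ, mul_add, Nat.cast_succ]
    linarith [rpow_neg_succ_le_rpow_neg_sub ha hτ]

theorem mul_sum_Ioc_rpow_neg_succ_le {a : ℝ} (ha : 0 ≤ a) {m : ℕ} (hm : 0 < m) (τ : ℕ) :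
    a * ∑ k ∈ Ioc m τ, (k : ℝ) ^ (-(a + 1)) ≤ (m : ℝ) ^ (-a) := by
  rcases le_or_gt m τ with hmτ | hτm
  · have : (0 : ℝ) ≤ (τ : ℝ) ^ (-a) := by positivity
    linarith [mul_sum_Ioc_rpow_neg_succ_le_sub ha hm hmτ]
  · rw [Ioc_eq_empty_of_le hτm.le, sum_empty, mul_zero]
    positivity

theorem sum_Icc_le_of_bounded_head_of_rpow_tail {f : ℕ → ℝ} {m : ℕ} (hm : 0 < m)
    {ω β a : ℝ} (ha : 0 < a) (hω : 0 ≤ ω) (hβ : 0 ≤ β)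
    (hhead : ∀ k, 0 < k → k ≤ m → f k ≤ ω)
    (htail : ∀ k, m < k → f k ≤ β * (k : ℝ) ^ (-(a + 1))) (τ : ℕ) :
    ∑ k ∈ Icc 1 τ, f k ≤ m * ω + β * (m : ℝ) ^ (-a) / a := by
  rw [← sum_filter_add_sum_filter_not (Icc 1 τ) (· ≤ m)]
  have hcard : #{k ∈ Icc 1 τ | k ≤ m} ≤ m := by
    simpa using card_le_card (s := {k ∈ Icc 1 τ | k ≤ m}) (t := Icc 1 m)
      (fun k hk => by simp only [mem_filter, mem_Icc] at hk ⊢; omega)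
  have hhead_sum : ∑ k ∈ Icc 1 τ with k ≤ m, f k ≤ m * ω :=
    calc _ ≤ #{k ∈ Icc 1 τ | k ≤ m} • ω :=
          sum_le_card_nsmul _ _ _ fun k hk => by
            simp only [mem_filter, mem_Icc] at hk; exact hhead k (by omega) hk.2
      _ ≤ m * ω := by rw [nsmul_eq_mul]; gcongr
  have htail_set : {k ∈ Icc 1 τ | ¬k ≤ m} = Ioc m τ := by
    ext k; simp only [mem_filter, mem_Icc, mem_Ioc]; omega
  have htail_sum : ∑ k ∈ Ioc m τ, f k ≤ β * (m : ℝ) ^ (-a) / a :=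
    calc _ ≤ β * ∑ k ∈ Ioc m τ, (k : ℝ) ^ (-(a + 1)) := by
          rw [mul_sum]; exact sum_le_sum fun k hk => htail k (mem_Ioc.mp hk).1
      _ ≤ β * (m : ℝ) ^ (-a) / a := by
          rw [le_div_iff₀ ha, mul_assoc, mul_comm _ a]
          gcongr
          exact mul_sum_Ioc_rpow_neg_succ_le ha.le hm τ
  rw [htail_set]
  linarith

theorem stmt_19_general (n : ℕ) (hn : 0 < n) (q : ℝ) (hq : q ∈ Set.Ioo (0 : ℝ) 1)
    (c : ℝ) (hc1 : (n : ℝ) / (1 - q) < c) (hc2 : (n : ℝ) ≤ c)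
    (α ω cund β : ℝ)
    (hα : α = c * (1 - q) / n)
    (hω : ω = Real.exp (-(1 - q)))
    (hβ : β = Real.exp (-cund * (1 - q)))
    (S : ℕ → ℝ)
    (hS1 : ∀ k : ℕ, 0 < k → (k : ℝ) ≤ c / n → S k = k)
    (hS2 : ∀ k : ℕ, c / n < (k : ℝ) → cund + (c / n) * Real.log k ≤ S k) :
    ∀ τ : ℕ, 0 < τ →
      ∑ k ∈ Finset.Icc 1 τ, Real.exp (-(1 - q) * S k) ≤
        (c / n) * ω + α * β / (α - 1) := by
  intro τ _
  have hn0 : (0 : ℝ) < n := Nat.cast_pos.mpr hn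
  have hq1 : 0 < 1 - q := sub_pos.mpr hq.2
  have hα1 : 1 < α := by
    rw [div_lt_iff₀ hq1] at hc1
    rw [hα, lt_div_iff₀ hn0]
    linarith
  have hω0 : 0 < ω := hω ▸ exp_pos _
  have hβ0 : 0 < β := hβ ▸ exp_pos _
  set m := ⌊c / n⌋₊
  have hm : 0 < m := Nat.floor_pos.mpr ((one_le_div hn0).mpr hc2)
  have hmc : (m : ℝ) ≤ c / n := Nat.floor_le (div_nonneg (hn0.le.trans hc2) hn0.le)
  have hhead : ∀ k, 0 < k → k ≤ m → exp (-(1 - q) * S k) ≤ ω := by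
    intro k hk hkm
    have hk1 : (1 : ℝ) ≤ k := by exact_mod_cast hk
    rw [hS1 k hk (le_trans (by exact_mod_cast hkm) hmc), hω, exp_le_exp]
    nlinarith
  have htail : ∀ k, m < k → exp (-(1 - q) * S k) ≤ β * (k : ℝ) ^ (-((α - 1) + 1)) := by
    intro k hk
    have hck : c / n < k := (Nat.lt_floor_add_one _).trans_le (by exact_mod_cast hk)
    have hk0 : (0 : ℝ) < k := by exact_mod_cast hm.trans hk
    rw [sub_add_cancel, rpow_def_of_pos hk0, hβ, ← exp_add, exp_le_exp, hα,
      show log k * -(c * (1 - q) / n) = -(1 - q) * (c / n * log k) by ring]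
    nlinarith [hS2 k hck]
  calc ∑ k ∈ Icc 1 τ, exp (-(1 - q) * S k)
      ≤ m * ω + β * (m : ℝ) ^ (-(α - 1)) / (α - 1) :=
        sum_Icc_le_of_bounded_head_of_rpow_tail hm (sub_pos.mpr hα1) hω0.le hβ0.le hhead htail τ
    _ ≤ c / n * ω + α * β / (α - 1) := by
        have hmpow : (m : ℝ) ^ (-(α - 1)) ≤ 1 :=
          rpow_le_one_of_one_le_of_nonpos (by exact_mod_cast hm) (by linarith)
        have hβα : β * (m : ℝ) ^ (-(α - 1)) ≤ α * β := by nlinarith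
        gcongr

theorem stmt_19 (n : ℕ) (hn : 0 < n) (q : ℝ) (hq : q ∈ Set.Ioo (0 : ℝ) 1)
    (c : ℝ) (hc1 : (n : ℝ) / (1 - q) < c) (hc2 : (n : ℝ) ≤ c)
    (α ω cund β : ℝ)
    (hα : α = c * (1 - q) / n)
    (hω : ω = Real.exp (-(1 - q)))
    (hcund : cund = (⌊c / n⌋₊ : ℝ) - (c / n) / (⌊c / n⌋₊ : ℝ)
      - (c / n) * Real.log (⌊c / n⌋₊ : ℝ))
    (hβ : β = Real.exp (-cund * (1 - q)))
    (S : ℕ → ℝ)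
    (hS1 : ∀ k : ℕ, 0 < k → (k : ℝ) ≤ c / n → S k = k)
    (hS2 : ∀ k : ℕ, c / n < (k : ℝ) → cund + (c / n) * Real.log k ≤ S k) :
    ∀ τ : ℕ, 0 < τ →
      ∑ k ∈ Finset.Icc 1 τ, Real.exp (-(1 - q) * S k) ≤
        (c / n) * ω + α * β / (α - 1) :=
  stmt_19_general n hn q hq c hc1 hc2 α ω cund β hα hω hβ S hS1 hS2
end
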